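/- Let E be a real normed vector space, let λ ∈ (0,1), and let f, g : E → ℝ be convex continuous functions admitting a common continuous affine minorant (there exist φ₀ ∈ E* and c ∈ ℝ with φ₀(u) − c ≤ f(u) and φ₀(u) − c ≤ g(u) for all u ∈ E). For s ∈ [0,1] define G_s(f,g;λ)(x) = (sin(πλ)/π) ∫₀¹ t^{λ−1}(1−t)^{−λ} (f !_{st+(1−s)λ} g)(x) dt. Then for every fixed x ∈ E, the map s ↦ G_s(f,g;λ)(x) is convex on [0,1] and monotone increasing on [0,1]. -/

import Mathlib

open Real

/-- The `t`-weighted functional harmonic mean of `f,g : E → ℝ`, evaluated at `x`. -/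
noncomputable def funHarm {E : Type*} [NormedAddCommGroup E] [NormedSpace ℝ E]
    (f g : E → ℝ) (t : ℝ) (x : E) : ℝ :=
  sSup { r : ℝ | ∃ φ : E →L[ℝ] ℝ, ∃ c₁ c₂ : ℝ,
    (∀ u : E, φ u - f u ≤ c₁) ∧ (∀ u : E, φ u - g u ≤ c₂) ∧
    r = φ x - (1 - t) * c₁ - t * c₂ }

/-- The family `G_s(f,g;λ)(x) = (sin(πλ)/π) ∫₀¹ t^{λ−1}(1−t)^{−λ} (f !_{st+(1−s)λ} g)(x) dt`. -/
noncomputable def funG {E : Type*} [NormedAddCommGroup E] [NormedSpace ℝ E]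
    (f g : E → ℝ) (l s : ℝ) (x : E) : ℝ :=
  (Real.sin (π * l) / π) *
    ∫ t in (0 : ℝ)..1, t ^ (l - 1) * (1 - t) ^ (-l) * funHarm f g (s * t + (1 - s) * l) x

/-!
For fixed `x`, `h τ = (f !_τ g)(x)` is convex on `[0,1]`, being a supremum of affine functions
of `τ`. Up to the factor `sin(πλ)/π ≥ 0`, `G_s` is `∫₀¹ w(t) h(s t + (1 - s) λ) dt` with
`w(t) = t^{λ-1}(1-t)^{-λ}` the unnormalised Beta(λ, 1-λ) density, whose mean is `λ`. The argument
of `h` is affine in `s`, so convexity in `s` holds pointwise under the integral. At `s = 0` the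
integral is `h(λ) ∫₀¹ w`, and integrating a supporting line of `h` at `λ` (Jensen) shows that this
is the minimum over `s ∈ [0,1]`; a convex function on `[0,1]` minimised at `0` is increasing.
-/

open Set MeasureTheory intervalIntegral

lemma Convex.mul_add_one_sub_mul_mem {S : Set ℝ} (hS : Convex ℝ S) {s t m : ℝ}
    (hs : s ∈ Icc (0 : ℝ) 1) (ht : t ∈ S) (hm : m ∈ S) : s * t + (1 - s) * m ∈ S :=
  hS ht hm hs.1 (sub_nonneg.2 hs.2) (add_sub_cancel s 1)

namespace ConvexOn

variable {S : Set ℝ} {h : ℝ → ℝ}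

lemma exists_affine_le_of_mem_interior {m : ℝ} (hh : ConvexOn ℝ S h) (hm : m ∈ interior S) :
    ∃ k, ∀ y ∈ S, h m + k * (y - m) ≤ h y := by
  refine ⟨derivWithin h (Ioi m) m, fun y hy => ?_⟩
  rcases lt_trichotomy y m with hym | rfl | hmy
  · have hslope := (hh.slope_le_leftDeriv_of_mem_interior hy hm hym).trans
      (hh.leftDeriv_le_rightDeriv_of_mem_interior hm)
    rw [slope_def_field, div_le_iff₀ (sub_pos.2 hym)] at hslope
    linarith
  · simp
  · have hslope := hh.rightDeriv_le_slope_of_mem_interior hm hy hmy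
    rw [slope_def_field, le_div_iff₀ (sub_pos.2 hmy)] at hslope
    linarith

lemma exists_abs_le_of_Icc {p q : ℝ} (hh : ConvexOn ℝ (Icc p q) h) (hpq : p < q) :
    ∃ C, ∀ y ∈ Icc p q, |h y| ≤ C := by
  obtain ⟨k, hk⟩ := hh.exists_affine_le_of_mem_interior (m := (p + q) / 2)
    (by rw [interior_Icc]; constructor <;> linarith)
  refine ⟨max (max (h p) (h q)) (|h ((p + q) / 2)| + |k| * (q - p)),
    fun y hy => abs_le.2 ⟨?_, ?_⟩⟩
  · have hdist : |y - (p + q) / 2| ≤ q - p :=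
      abs_sub_le_iff.2 ⟨by linarith [hy.1, hy.2], by linarith [hy.1, hy.2]⟩
    have hline : -(|k| * (q - p)) ≤ k * (y - (p + q) / 2) :=
      calc -(|k| * (q - p)) ≤ -(|k| * |y - (p + q) / 2|) := by gcongr
        _ = -|k * (y - (p + q) / 2)| := by rw [abs_mul]
        _ ≤ k * (y - (p + q) / 2) := neg_abs_le _
    linarith [hk y hy, neg_abs_le (h ((p + q) / 2)),
      le_max_right (max (h p) (h q)) (|h ((p + q) / 2)| + |k| * (q - p))]
  · exact (hh.le_max_of_mem_Icc (left_mem_Icc.2 hpq.le) (right_mem_Icc.2 hpq.le) hy).trans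
      (le_max_left _ _)

lemma monotoneOn_of_isMinOn {p : ℝ} (hh : ConvexOn ℝ S h) (hp : p ∈ S) (hmin : IsMinOn h S p)
    (hS : S ⊆ Ici p) : MonotoneOn h S := by
  intro y hy z hz hyz
  rcases (show p ≤ y from hS hy).eq_or_lt with rfl | hpy
  · exact isMinOn_iff.1 hmin z hz
  · exact hh.le_right_of_left_le'' hp hz hpy hyz (isMinOn_iff.1 hmin y hy)

end ConvexOn

section BetaWeight

variable {a b : ℝ}

lemma intervalIntegrable_rpow_mul_one_sub_rpow (ha : -1 < a) (hb : -1 < b) :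
    IntervalIntegrable (fun t : ℝ => t ^ a * (1 - t) ^ b) volume 0 1 := by
  have hleft : IntervalIntegrable (fun t : ℝ => t ^ a * (1 - t) ^ b) volume 0 (1 / 2) := by
    refine (intervalIntegrable_rpow' ha).mul_continuousOn
      ((continuous_const.sub continuous_id).continuousOn.rpow_const fun t ht => Or.inl ?_)
    rw [uIcc_of_le (by norm_num)] at ht
    exact sub_ne_zero.2 (by linarith [ht.2] : t < 1).ne'
  have hright : IntervalIntegrable (fun t : ℝ => t ^ a * (1 - t) ^ b) volume (1 / 2) 1 := by
    have h := (intervalIntegrable_rpow' hb (a := 1 / 2) (b := 0)).comp_sub_left 1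
    rw [show (1 : ℝ) - 1 / 2 = 1 / 2 by norm_num, sub_zero] at h
    refine h.continuousOn_mul (continuous_id.continuousOn.rpow_const fun t ht => Or.inl ?_)
    rw [uIcc_of_le (by norm_num)] at ht
    exact (lt_of_lt_of_le (by norm_num) ht.1).ne'
  exact hleft.trans hright

lemma hasDerivAt_rpow_mul_one_sub_rpow {t : ℝ} (ht : t ∈ Ioo (0 : ℝ) 1) :
    HasDerivAt (fun t : ℝ => t ^ (a + 1) * (1 - t) ^ (b + 1))
      (t ^ a * (1 - t) ^ b * ((a + 1) * (1 - t) - (b + 1) * t)) t := by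
  have ht0 : 0 < t := ht.1
  have ht1 : 0 < 1 - t := sub_pos.2 ht.2
  have hleft := hasDerivAt_rpow_const (p := a + 1) (Or.inl ht0.ne')
  have hright := (hasDerivAt_rpow_const (p := b + 1) (Or.inl ht1.ne')).comp t
    ((hasDerivAt_id t).const_sub 1)
  refine (hleft.mul hright).congr_deriv ?_
  simp only [Function.comp_apply, add_sub_cancel_right, rpow_add ht0, rpow_add ht1, rpow_one]
  ring

lemma integral_rpow_mul_one_sub_rpow_mul_self (ha : -1 < a) (hb : -1 < b) :
    (a + b + 2) * ∫ t in (0 : ℝ)..1, t ^ a * (1 - t) ^ b * t =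
      (a + 1) * ∫ t in (0 : ℝ)..1, t ^ a * (1 - t) ^ b := by
  have hw := intervalIntegrable_rpow_mul_one_sub_rpow ha hb
  have hψ : ContinuousOn (fun t : ℝ => t ^ (a + 1) * (1 - t) ^ (b + 1)) (Icc 0 1) :=
    (continuous_id.continuousOn.rpow_const fun _ _ => Or.inr (by linarith)).mul
      ((continuous_const.sub continuous_id).continuousOn.rpow_const fun _ _ =>
        Or.inr (by linarith))
  have hFTC := integral_eq_sub_of_hasDerivAt_of_le zero_le_one hψ
    (fun t ht => hasDerivAt_rpow_mul_one_sub_rpow ht)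
    (hw.mul_continuousOn (by fun_prop))
  have hsplit : ∀ t : ℝ, t ^ a * (1 - t) ^ b * ((a + 1) * (1 - t) - (b + 1) * t) =
      (a + 1) * (t ^ a * (1 - t) ^ b) - (a + b + 2) * (t ^ a * (1 - t) ^ b * t) := fun t => by
    ring
  simp only [hsplit] at hFTC
  rw [integral_sub (hw.const_mul _) ((hw.mul_continuousOn (continuousOn_id' _)).const_mul _),
    intervalIntegral.integral_const_mul, intervalIntegral.integral_const_mul] at hFTC
  simp only [one_rpow, sub_self, zero_rpow (show b + 1 ≠ 0 by linarith), mul_zero,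
    zero_rpow (show a + 1 ≠ 0 by linarith), sub_zero, mul_one] at hFTC
  linarith

end BetaWeight

noncomputable def shrunkAverage (w h : ℝ → ℝ) (m s : ℝ) : ℝ :=
  ∫ t in (0 : ℝ)..1, w t * h (s * t + (1 - s) * m)

section ShrunkAverage

variable {w h : ℝ → ℝ} {m : ℝ}

lemma intervalIntegrable_shrunkAverage_integrand (hw : IntervalIntegrable w volume 0 1)
    (hh : ConvexOn ℝ (Icc 0 1) h) (hm : m ∈ Ioo (0 : ℝ) 1) {s : ℝ} (hs : s ∈ Icc (0 : ℝ) 1) :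
    IntervalIntegrable (fun t => w t * h (s * t + (1 - s) * m)) volume 0 1 := by
  obtain ⟨C, hC⟩ := hh.exists_abs_le_of_Icc zero_lt_one
  rw [intervalIntegrable_iff_integrableOn_Ioc_of_le zero_le_one] at hw ⊢
  have hmeas : AEStronglyMeasurable (fun t => h (s * t + (1 - s) * m))
      (volume.restrict (Ioc (0 : ℝ) 1)) := by
    rw [← Measure.restrict_congr_set Ioo_ae_eq_Ioc]
    refine ContinuousOn.aestronglyMeasurable ?_ measurableSet_Ioo
    refine (interior_Icc (a := (0 : ℝ)) (b := 1) ▸ hh.continuousOn_interior).comp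
      (by fun_prop) fun t ht => (convex_Ioo 0 1).mul_add_one_sub_mul_mem hs ht hm
  refine (hw.bdd_mul (c := C) hmeas ?_).congr (ae_of_all _ fun t => mul_comm _ _)
  rw [ae_restrict_iff' measurableSet_Ioc]
  exact ae_of_all _ fun t ht =>
    hC _ ((convex_Icc 0 1).mul_add_one_sub_mul_mem hs (Ioc_subset_Icc_self ht)
      (Ioo_subset_Icc_self hm))

lemma shrunkAverage_zero : shrunkAverage w h m 0 = (∫ t in (0 : ℝ)..1, w t) * h m := by
  simp [shrunkAverage, intervalIntegral.integral_mul_const]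

variable (hw : IntervalIntegrable w volume 0 1) (hw₀ : ∀ t ∈ Icc (0 : ℝ) 1, 0 ≤ w t)
  (hh : ConvexOn ℝ (Icc 0 1) h) (hm : m ∈ Ioo (0 : ℝ) 1)
include hw hw₀ hh hm

lemma convexOn_shrunkAverage : ConvexOn ℝ (Icc 0 1) (shrunkAverage w h m) := by
  refine ⟨convex_Icc 0 1, fun s₁ hs₁ s₂ hs₂ a b ha hb hab => ?_⟩
  have hτ : ∀ s ∈ Icc (0 : ℝ) 1, ∀ t ∈ Icc (0 : ℝ) 1, s * t + (1 - s) * m ∈ Icc (0 : ℝ) 1 :=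
    fun s hs t ht => (convex_Icc 0 1).mul_add_one_sub_mul_mem hs ht (Ioo_subset_Icc_self hm)
  have hpointwise : ∀ t ∈ Icc (0 : ℝ) 1,
      w t * h ((a * s₁ + b * s₂) * t + (1 - (a * s₁ + b * s₂)) * m) ≤
        a * (w t * h (s₁ * t + (1 - s₁) * m)) + b * (w t * h (s₂ * t + (1 - s₂) * m)) := by
    intro t ht
    have hsplit : (a * s₁ + b * s₂) * t + (1 - (a * s₁ + b * s₂)) * m =
        a * (s₁ * t + (1 - s₁) * m) + b * (s₂ * t + (1 - s₂) * m) := by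
      rw [eq_sub_of_add_eq' hab]; ring
    have hconv := hh.2 (hτ s₁ hs₁ t ht) (hτ s₂ hs₂ t ht) ha hb hab
    simp only [smul_eq_mul] at hconv
    rw [hsplit]
    exact (mul_le_mul_of_nonneg_left hconv (hw₀ t ht)).trans_eq (by ring)
  have hint := fun s hs => intervalIntegrable_shrunkAverage_integrand hw hh hm (s := s) hs
  have hmono := integral_mono_on zero_le_one
    (hint _ ((convex_Icc 0 1) hs₁ hs₂ ha hb hab)) (((hint s₁ hs₁).const_mul a).add
      ((hint s₂ hs₂).const_mul b)) hpointwise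
  rwa [integral_add ((hint s₁ hs₁).const_mul a) ((hint s₂ hs₂).const_mul b),
    intervalIntegral.integral_const_mul, intervalIntegral.integral_const_mul] at hmono

lemma shrunkAverage_zero_le
    (hmean : ∫ t in (0 : ℝ)..1, w t * t = m * ∫ t in (0 : ℝ)..1, w t)
    {s : ℝ} (hs : s ∈ Icc (0 : ℝ) 1) : shrunkAverage w h m 0 ≤ shrunkAverage w h m s := by
  obtain ⟨k, hk⟩ := hh.exists_affine_le_of_mem_interior (m := m) (by rwa [interior_Icc])
  have hline : ∀ t, w t * (h m + k * (s * t + (1 - s) * m - m)) =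
      (h m - k * s * m) * w t + k * s * (w t * t) := fun t => by ring
  calc shrunkAverage w h m 0
      = ∫ t in (0 : ℝ)..1, w t * (h m + k * (s * t + (1 - s) * m - m)) := by
        simp only [shrunkAverage_zero, hline]
        rw [integral_add (hw.const_mul _) ((hw.mul_continuousOn (continuousOn_id' _)).const_mul _),
          intervalIntegral.integral_const_mul, intervalIntegral.integral_const_mul, hmean]
        ring
    _ ≤ shrunkAverage w h m s := by
      refine integral_mono_on zero_le_one (hw.mul_continuousOn (by fun_prop))
        (intervalIntegrable_shrunkAverage_integrand hw hh hm hs) fun t ht => ?_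
      exact mul_le_mul_of_nonneg_left (hk _ ((convex_Icc 0 1).mul_add_one_sub_mul_mem hs ht
        (Ioo_subset_Icc_self hm))) (hw₀ t ht)

lemma monotoneOn_shrunkAverage
    (hmean : ∫ t in (0 : ℝ)..1, w t * t = m * ∫ t in (0 : ℝ)..1, w t) :
    MonotoneOn (shrunkAverage w h m) (Icc 0 1) :=
  (convexOn_shrunkAverage hw hw₀ hh hm).monotoneOn_of_isMinOn (left_mem_Icc.2 zero_le_one)
    (isMinOn_iff.2 fun _ hs => shrunkAverage_zero_le hw hw₀ hh hm hmean hs) fun _ hs => hs.1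

end ShrunkAverage

section FunHarm

variable {E : Type*} [NormedAddCommGroup E] [NormedSpace ℝ E] {f g : E → ℝ} {τ : ℝ} {x : E}

lemma le_funHarm (hτ : τ ∈ Icc (0 : ℝ) 1) {φ : E →L[ℝ] ℝ} {c₁ c₂ : ℝ}
    (h₁ : ∀ u, φ u - f u ≤ c₁) (h₂ : ∀ u, φ u - g u ≤ c₂) :
    φ x - (1 - τ) * c₁ - τ * c₂ ≤ funHarm f g τ x := by
  refine le_csSup ⟨(1 - τ) * f x + τ * g x, ?_⟩ ⟨φ, c₁, c₂, h₁, h₂, rfl⟩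
  rintro _ ⟨ψ, d₁, d₂, hd₁, hd₂, rfl⟩
  nlinarith [mul_le_mul_of_nonneg_left (hd₁ x) (sub_nonneg.2 hτ.2),
    mul_le_mul_of_nonneg_left (hd₂ x) hτ.1]

lemma funHarm_le_of_forall
    (hmin : ∃ φ₀ : E →L[ℝ] ℝ, ∃ c : ℝ, ∀ u : E, φ₀ u - c ≤ f u ∧ φ₀ u - c ≤ g u) {M : ℝ}
    (hM : ∀ (φ : E →L[ℝ] ℝ) (c₁ c₂ : ℝ), (∀ u, φ u - f u ≤ c₁) → (∀ u, φ u - g u ≤ c₂) →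
      φ x - (1 - τ) * c₁ - τ * c₂ ≤ M) :
    funHarm f g τ x ≤ M := by
  obtain ⟨φ₀, c, hc⟩ := hmin
  refine csSup_le ⟨_, φ₀, c, c, fun u => ?_, fun u => ?_, rfl⟩ ?_
  · linarith [(hc u).1]
  · linarith [(hc u).2]
  · rintro _ ⟨φ, c₁, c₂, h₁, h₂, rfl⟩
    exact hM φ c₁ c₂ h₁ h₂

lemma convexOn_funHarm
    (hmin : ∃ φ₀ : E →L[ℝ] ℝ, ∃ c : ℝ, ∀ u : E, φ₀ u - c ≤ f u ∧ φ₀ u - c ≤ g u) (x : E) :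
    ConvexOn ℝ (Icc 0 1) (fun τ => funHarm f g τ x) := by
  refine ⟨convex_Icc 0 1, fun τ₁ hτ₁ τ₂ hτ₂ a b ha hb hab =>
    funHarm_le_of_forall hmin fun φ c₁ c₂ h₁ h₂ => ?_⟩
  have hsplit : φ x - (1 - (a • τ₁ + b • τ₂)) * c₁ - (a • τ₁ + b • τ₂) * c₂ =
      a * (φ x - (1 - τ₁) * c₁ - τ₁ * c₂) + b * (φ x - (1 - τ₂) * c₁ - τ₂ * c₂) := by
    simp only [smul_eq_mul]
    rw [eq_sub_of_add_eq' hab]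
    ring
  rw [hsplit]
  exact add_le_add (mul_le_mul_of_nonneg_left (le_funHarm hτ₁ h₁ h₂) ha)
    (mul_le_mul_of_nonneg_left (le_funHarm hτ₂ h₁ h₂) hb)

end FunHarm

theorem funG_convexOn_monotoneOn_general
    {E : Type*} [NormedAddCommGroup E] [NormedSpace ℝ E]
    (l : ℝ) (hl : l ∈ Set.Ioo (0 : ℝ) 1)
    (f g : E → ℝ)
    (hmin : ∃ φ₀ : E →L[ℝ] ℝ, ∃ c : ℝ, ∀ u : E, φ₀ u - c ≤ f u ∧ φ₀ u - c ≤ g u)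
    (x : E) :
    ConvexOn ℝ (Set.Icc (0 : ℝ) 1) (fun s => funG f g l s x) ∧
      MonotoneOn (fun s => funG f g l s x) (Set.Icc (0 : ℝ) 1) := by
  have hw := intervalIntegrable_rpow_mul_one_sub_rpow (a := l - 1) (b := -l)
    (by linarith [hl.1]) (by linarith [hl.2])
  have hw₀ : ∀ t ∈ Icc (0 : ℝ) 1, 0 ≤ t ^ (l - 1) * (1 - t) ^ (-l) := fun t ht =>
    mul_nonneg (rpow_nonneg ht.1 _) (rpow_nonneg (sub_nonneg.2 ht.2) _)
  have hmean : ∫ t in (0 : ℝ)..1, t ^ (l - 1) * (1 - t) ^ (-l) * t =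
      l * ∫ t in (0 : ℝ)..1, t ^ (l - 1) * (1 - t) ^ (-l) := by
    simpa [show l - 1 + -l + 2 = 1 by ring] using
      integral_rpow_mul_one_sub_rpow_mul_self (a := l - 1) (b := -l)
        (by linarith [hl.1]) (by linarith [hl.2])
  have hh := convexOn_funHarm hmin x
  have hc : 0 ≤ sin (π * l) / π := div_nonneg (sin_nonneg_of_nonneg_of_le_pi
    (mul_nonneg pi_pos.le hl.1.le) (mul_le_of_le_one_right pi_pos.le hl.2.le)) pi_pos.le
  exact ⟨(convexOn_shrunkAverage hw hw₀ hh hl).smul hc, fun s hs s' hs' hss' =>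
    mul_le_mul_of_nonneg_left (monotoneOn_shrunkAverage hw hw₀ hh hl hmean hs hs' hss') hc⟩

/-- For every fixed `x`, the map `s ↦ G_s(f,g;λ)(x)` is convex and monotone
increasing on `[0,1]`. -/
theorem funG_convexOn_monotoneOn
    {E : Type*} [NormedAddCommGroup E] [NormedSpace ℝ E]
    (l : ℝ) (hl : l ∈ Set.Ioo (0 : ℝ) 1)
    (f g : E → ℝ)
    (hf : ConvexOn ℝ Set.univ f) (hfc : Continuous f)
    (hg : ConvexOn ℝ Set.univ g) (hgc : Continuous g)
    (hmin : ∃ φ₀ : E →L[ℝ] ℝ, ∃ c : ℝ, ∀ u : E, φ₀ u - c ≤ f u ∧ φ₀ u - c ≤ g u)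
    (x : E) :
    ConvexOn ℝ (Set.Icc (0 : ℝ) 1) (fun s => funG f g l s x) ∧
      MonotoneOn (fun s => funG f g l s x) (Set.Icc (0 : ℝ) 1) :=
  funG_convexOn_monotoneOn_general l hl f g hmin x
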